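/- For ξ = (ξᶠ, ξᵛ, ξʳ) ∈ ℝ⁹, the matrix exponential of ξ^∧ equals [[exp(ξᶠ^×), J̃(ξᶠ)ξᵛ, J̃(ξᶠ)ξʳ],[0,1,0],[0,0,1]], where J̃(φ) = (sin φ/φ)·I + (1 - sin φ/φ)·aaᵀ + ((1-cos φ)/φ)·a^× is the SO(3) left Jacobian, with φ = ‖φ‖ and a = φ/‖φ‖; in particular exp(ξ^∧) ∈ SE₂(3). -/

import Mathlib

open Matrix

/-- The cross (skew-symmetric) operator on `ℝ³`. -/
def skew (u : Fin 3 → ℝ) : Matrix (Fin 3) (Fin 3) ℝ :=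
  !![0, -u 2, u 1; u 2, 0, -u 0; -u 1, u 0, 0]

/-- Euclidean norm on `ℝ³`. -/
noncomputable def enorm3 (u : Fin 3 → ℝ) : ℝ :=
  Real.sqrt (u 0 ^ 2 + u 1 ^ 2 + u 2 ^ 2)

/-- The `SO(3)` left Jacobian, in closed form:
`J̃(φ) = (sin θ/θ)·I + (1 - sin θ/θ)·aaᵀ + ((1 - cos θ)/θ)·a^×`
where `θ = ‖φ‖` and `a = φ/θ`. -/
noncomputable def leftJac (φ : Fin 3 → ℝ) : Matrix (Fin 3) (Fin 3) ℝ :=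
  (Real.sin (enorm3 φ) / enorm3 φ) • (1 : Matrix (Fin 3) (Fin 3) ℝ) +
    (1 - Real.sin (enorm3 φ) / enorm3 φ) • vecMulVec ((enorm3 φ)⁻¹ • φ) ((enorm3 φ)⁻¹ • φ) +
    ((1 - Real.cos (enorm3 φ)) / enorm3 φ) • skew ((enorm3 φ)⁻¹ • φ)

/-- `SO(3)`: orthogonal `3×3` real matrices with determinant one. -/
def SO3 : Set (Matrix (Fin 3) (Fin 3) ℝ) :=
  {C | Cᵀ * C = 1 ∧ C.det = 1}

/-- The `5×5` block matrix `[[C, v, r],[0,1,0],[0,0,1]]`. -/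
def embed (C : Matrix (Fin 3) (Fin 3) ℝ) (v r : Fin 3 → ℝ) : Matrix (Fin 5) (Fin 5) ℝ :=
  !![C 0 0, C 0 1, C 0 2, v 0, r 0;
     C 1 0, C 1 1, C 1 2, v 1, r 1;
     C 2 0, C 2 1, C 2 2, v 2, r 2;
     0, 0, 0, 1, 0;
     0, 0, 0, 0, 1]

/-- `SE₂(3)` as a set of `5×5` real matrices. -/
def SE23 : Set (Matrix (Fin 5) (Fin 5) ℝ) :=
  {X | ∃ C ∈ SO3, ∃ v r : Fin 3 → ℝ, X = embed C v r}

/-- The wedge map `ℝ⁹ → ℝ^{5×5}`. -/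
def wedge (f v r : Fin 3 → ℝ) : Matrix (Fin 5) (Fin 5) ℝ :=
  !![0, -f 2, f 1, v 0, r 0;
     f 2, 0, -f 0, v 1, r 1;
     -f 1, f 0, 0, v 2, r 2;
     0, 0, 0, 0, 0;
     0, 0, 0, 0, 0]

/-! ### Auxiliary material -/

open scoped Nat

section Aux

set_option linter.unreachableTactic false
set_option linter.unusedTactic false

lemma enorm3_pos {f : Fin 3 → ℝ} (hf : f ≠ 0) : 0 < enorm3 f := by
  have h : f 0 ≠ 0 ∨ f 1 ≠ 0 ∨ f 2 ≠ 0 := by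
    by_contra h; push_neg at h
    exact hf (funext fun i => by fin_cases i <;> simp [h.1, h.2.1, h.2.2])
  have : 0 < f 0 ^ 2 + f 1 ^ 2 + f 2 ^ 2 := by
    rcases h with h | h | h <;> positivity
  exact Real.sqrt_pos.2 this

lemma sq_enorm3 (f : Fin 3 → ℝ) : enorm3 f ^ 2 = f 0 ^ 2 + f 1 ^ 2 + f 2 ^ 2 :=
  Real.sq_sqrt (by positivity)

lemma skew_sq (f : Fin 3 → ℝ) :
    skew f ^ 2 = vecMulVec f f - (f 0 ^ 2 + f 1 ^ 2 + f 2 ^ 2) • (1 : Matrix (Fin 3) (Fin 3) ℝ) := by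
  ext i j
  fin_cases i <;> fin_cases j <;>
    simp [skew, pow_two, mul_apply, Fin.sum_univ_three, vecMulVec, Matrix.one_apply] <;> ring

lemma skew_pow_three (f : Fin 3 → ℝ) :
    skew f ^ 3 = (-(enorm3 f ^ 2)) • skew f := by
  rw [sq_enorm3]
  ext i j
  fin_cases i <;> fin_cases j <;>
    simp [skew, pow_succ, pow_two, mul_apply, Fin.sum_univ_three] <;> ring

lemma skew_transpose (f : Fin 3 → ℝ) : (skew f)ᵀ = -skew f := by
  ext i j
  fin_cases i <;> fin_cases j <;> simp [skew]

lemma skew_pow_odd (f : Fin 3 → ℝ) (k : ℕ) :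
    skew f ^ (2 * k + 1) = (-(enorm3 f ^ 2)) ^ k • skew f := by
  induction k with
  | zero => simp
  | succ k ih =>
    have : 2 * (k + 1) + 1 = (2 * k + 1) + 2 := by ring
    rw [this, pow_add, ih, smul_mul_assoc, ← pow_succ' (skew f) 2,
      skew_pow_three, smul_smul, pow_succ]
    ring_nf

lemma skew_pow_even (f : Fin 3 → ℝ) (k : ℕ) :
    skew f ^ (2 * k + 2) = (-(enorm3 f ^ 2)) ^ k • skew f ^ 2 := by
  induction k with
  | zero => simp
  | succ k ih =>
    have : 2 * (k + 1) + 2 = (2 * k + 1) + 3 := by ring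
    rw [this, pow_add, skew_pow_odd, skew_pow_three, smul_mul_assoc, mul_smul_comm,
      smul_smul, ← pow_two, pow_succ]
    ring_nf

lemma skew_smul (c : ℝ) (f : Fin 3 → ℝ) : skew (c • f) = c • skew f := by
  ext i j; fin_cases i <;> fin_cases j <;> simp [skew] <;> ring

lemma vecMulVec_smul_smul (c : ℝ) (f : Fin 3 → ℝ) :
    vecMulVec (c • f) (c • f) = (c * c) • vecMulVec f f := by
  ext i j; simp [vecMulVec]; ring

lemma leftJac_eq {f : Fin 3 → ℝ} (hθ : enorm3 f ≠ 0) :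
    leftJac f = 1 + ((1 - Real.cos (enorm3 f)) / enorm3 f ^ 2) • skew f
      + ((enorm3 f - Real.sin (enorm3 f)) / enorm3 f ^ 3) • skew f ^ 2 := by
  have hvv : vecMulVec f f = skew f ^ 2 + (enorm3 f ^ 2) • (1 : Matrix (Fin 3) (Fin 3) ℝ) := by
    rw [skew_sq, sq_enorm3]; abel
  rw [leftJac, skew_smul, vecMulVec_smul_smul, hvv]
  match_scalars <;> (field_simp; try ring) <;> tauto

/-! ### Scalar series -/

lemma hasSum_sin_aux {θ : ℝ} (hθ : θ ≠ 0) :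
    HasSum (fun k : ℕ => (-(θ ^ 2)) ^ k * (((2 * k + 1)! : ℝ))⁻¹) (Real.sin θ / θ) := by
  have h := (Real.hasSum_sin θ).div_const θ
  have e : (fun k : ℕ => (-1 : ℝ) ^ k * θ ^ (2 * k + 1) / ((2 * k + 1)! : ℝ) / θ)
      = fun k : ℕ => (-(θ ^ 2)) ^ k * (((2 * k + 1)! : ℝ))⁻¹ := by
    funext k
    have hfac : ((2 * k + 1)! : ℝ) ≠ 0 := Nat.cast_ne_zero.mpr (Nat.factorial_ne_zero _)
    conv_rhs => rw [neg_pow, ← pow_mul]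
    field_simp
    ring
  rwa [e] at h

lemma hasSum_cos_aux (θ : ℝ) :
    HasSum (fun k : ℕ => (-(θ ^ 2)) ^ k * (((2 * k)! : ℝ))⁻¹) (Real.cos θ) := by
  have h := Real.hasSum_cos θ
  have e : (fun k : ℕ => (-1 : ℝ) ^ k * θ ^ (2 * k) / ((2 * k)! : ℝ))
      = fun k : ℕ => (-(θ ^ 2)) ^ k * (((2 * k)! : ℝ))⁻¹ := by
    funext k
    conv_rhs => rw [neg_pow, ← pow_mul]
    ring
  rwa [e] at h

lemma hasSum_beta {θ : ℝ} (hθ : θ ≠ 0) :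
    HasSum (fun k : ℕ => (-(θ ^ 2)) ^ k * (((2 * k + 2)! : ℝ))⁻¹)
      ((1 - Real.cos θ) / θ ^ 2) := by
  have h0 : HasSum (fun k : ℕ =>
      (fun k : ℕ => (-(θ ^ 2)) ^ k * (((2 * k)! : ℝ))⁻¹) (k + 1)) (Real.cos θ - 1) :=
    (hasSum_nat_add_iff (f := fun k : ℕ => (-(θ ^ 2)) ^ k * (((2 * k)! : ℝ))⁻¹) 1).mpr
      (by simpa using hasSum_cos_aux θ)
  have h1 : HasSum (fun k : ℕ => (-(θ ^ 2)) ^ (k + 1) * (((2 * (k + 1))! : ℝ))⁻¹)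
      (Real.cos θ - 1) := h0
  have h2 := h1.div_const (-(θ ^ 2))
  have e : (fun k : ℕ => (-(θ ^ 2)) ^ (k + 1) * (((2 * (k + 1))! : ℝ))⁻¹ / (-(θ ^ 2)))
      = fun k : ℕ => (-(θ ^ 2)) ^ k * (((2 * k + 2)! : ℝ))⁻¹ := by
    funext k
    have e2 : 2 * (k + 1) = 2 * k + 2 := by ring
    rw [e2, pow_succ]
    field_simp
  rw [e] at h2
  convert h2 using 1
  · rfl
  field_simp
  ring

lemma hasSum_gamma {θ : ℝ} (hθ : θ ≠ 0) :
    HasSum (fun k : ℕ => (-(θ ^ 2)) ^ k * (((2 * k + 3)! : ℝ))⁻¹)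
      ((θ - Real.sin θ) / θ ^ 3) := by
  have h0 : HasSum (fun k : ℕ =>
      (fun k : ℕ => (-(θ ^ 2)) ^ k * (((2 * k + 1)! : ℝ))⁻¹) (k + 1)) (Real.sin θ / θ - 1) :=
    (hasSum_nat_add_iff (f := fun k : ℕ => (-(θ ^ 2)) ^ k * (((2 * k + 1)! : ℝ))⁻¹) 1).mpr
      (by simpa using hasSum_sin_aux hθ)
  have h1 : HasSum (fun k : ℕ => (-(θ ^ 2)) ^ (k + 1) * (((2 * (k + 1) + 1)! : ℝ))⁻¹)
      (Real.sin θ / θ - 1) := h0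
  have h2 := h1.div_const (-(θ ^ 2))
  have e : (fun k : ℕ => (-(θ ^ 2)) ^ (k + 1) * (((2 * (k + 1) + 1)! : ℝ))⁻¹ / (-(θ ^ 2)))
      = fun k : ℕ => (-(θ ^ 2)) ^ k * (((2 * k + 3)! : ℝ))⁻¹ := by
    funext k
    have e2 : 2 * (k + 1) + 1 = 2 * k + 3 := by ring
    rw [e2, pow_succ]
    field_simp
  rw [e] at h2
  convert h2 using 1
  · rfl
  field_simp
  ring

/-! ### Matrix series -/

attribute [local instance] Matrix.linftyOpNormedAddCommGroup Matrix.linftyOpNormedRing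
  Matrix.linftyOpNormedAlgebra

lemma hasSum_exp_skew {f : Fin 3 → ℝ} (hθ : enorm3 f ≠ 0) :
    HasSum (fun n : ℕ => ((n ! : ℝ))⁻¹ • skew f ^ n)
      ((1 + ((1 - Real.cos (enorm3 f)) / enorm3 f ^ 2) • skew f ^ 2)
        + (Real.sin (enorm3 f) / enorm3 f) • skew f) := by
  set θ := enorm3 f with hθdef
  refine HasSum.even_add_odd ?_ ?_
  · have hs1 : HasSum (fun k : ℕ =>
        (fun k : ℕ => (((2 * k)! : ℝ))⁻¹ • skew f ^ (2 * k)) (k + 1))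
        (((1 - Real.cos θ) / θ ^ 2) • skew f ^ 2) := by
      have h := (hasSum_beta hθ).smul_const (skew f ^ 2)
      have e : (fun k : ℕ => ((-(θ ^ 2)) ^ k * (((2 * k + 2)! : ℝ))⁻¹) • skew f ^ 2)
          = fun k : ℕ => (((2 * (k + 1))! : ℝ))⁻¹ • skew f ^ (2 * (k + 1)) := by
        funext k
        have e2 : 2 * (k + 1) = 2 * k + 2 := by ring
        rw [e2, skew_pow_even, smul_smul, mul_comm]
      rwa [e] at h
    have h2 := (hasSum_nat_add_iff
        (f := fun k : ℕ => (((2 * k)! : ℝ))⁻¹ • skew f ^ (2 * k)) 1).mp hs1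
    simpa [add_comm] using h2
  · have h := (hasSum_sin_aux hθ).smul_const (skew f)
    have e : (fun k : ℕ => ((-(θ ^ 2)) ^ k * (((2 * k + 1)! : ℝ))⁻¹) • skew f)
        = fun k : ℕ => (((2 * k + 1)! : ℝ))⁻¹ • skew f ^ (2 * k + 1) := by
      funext k
      rw [skew_pow_odd, smul_smul, mul_comm]
    rwa [e] at h

lemma hasSum_jac_skew {f : Fin 3 → ℝ} (hθ : enorm3 f ≠ 0) :
    HasSum (fun n : ℕ => (((n + 1)! : ℝ))⁻¹ • skew f ^ n)
      ((1 + ((enorm3 f - Real.sin (enorm3 f)) / enorm3 f ^ 3) • skew f ^ 2)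
        + ((1 - Real.cos (enorm3 f)) / enorm3 f ^ 2) • skew f) := by
  set θ := enorm3 f with hθdef
  refine HasSum.even_add_odd ?_ ?_
  · have hs1 : HasSum (fun k : ℕ =>
        (fun k : ℕ => (((2 * k + 1)! : ℝ))⁻¹ • skew f ^ (2 * k)) (k + 1))
        (((θ - Real.sin θ) / θ ^ 3) • skew f ^ 2) := by
      have h := (hasSum_gamma hθ).smul_const (skew f ^ 2)
      have e : (fun k : ℕ => ((-(θ ^ 2)) ^ k * (((2 * k + 3)! : ℝ))⁻¹) • skew f ^ 2)
          = fun k : ℕ => (((2 * (k + 1) + 1)! : ℝ))⁻¹ • skew f ^ (2 * (k + 1)) := by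
        funext k
        have e2 : 2 * (k + 1) = 2 * k + 2 := by ring
        have e3 : 2 * (k + 1) + 1 = 2 * k + 3 := by ring
        rw [e3, e2, skew_pow_even, smul_smul, mul_comm]
      rwa [e] at h
    have h2 := (hasSum_nat_add_iff
        (f := fun k : ℕ => (((2 * k + 1)! : ℝ))⁻¹ • skew f ^ (2 * k)) 1).mp hs1
    simpa [add_comm] using h2
  · have h := (hasSum_beta hθ).smul_const (skew f)
    have e : (fun k : ℕ => ((-(θ ^ 2)) ^ k * (((2 * k + 2)! : ℝ))⁻¹) • skew f)
        = fun k : ℕ => (((2 * k + 1 + 1)! : ℝ))⁻¹ • skew f ^ (2 * k + 1) := by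
      funext k
      have e3 : 2 * k + 1 + 1 = 2 * k + 2 := by ring
      rw [e3, skew_pow_odd, smul_smul, mul_comm]
    rwa [e] at h

lemma exp_skew_eq {f : Fin 3 → ℝ} (hθ : enorm3 f ≠ 0) :
    NormedSpace.exp (skew f) =
      1 + (Real.sin (enorm3 f) / enorm3 f) • skew f
        + ((1 - Real.cos (enorm3 f)) / enorm3 f ^ 2) • skew f ^ 2 := by
  rw [NormedSpace.exp_eq_tsum ℝ]
  exact (hasSum_exp_skew hθ).tsum_eq.trans (by abel)

lemma hasSum_leftJac {f : Fin 3 → ℝ} (hθ : enorm3 f ≠ 0) :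
    HasSum (fun n : ℕ => (((n + 1)! : ℝ))⁻¹ • skew f ^ n) (leftJac f) := by
  rw [leftJac_eq hθ]
  have h := hasSum_jac_skew hθ
  convert h using 1
  abel

/-! ### Determinant and orthogonality -/

lemma det_rodrigues (f : Fin 3 → ℝ) (a b : ℝ) :
    (1 + a • skew f + b • skew f ^ 2).det
      = (1 - b * (f 0 ^ 2 + f 1 ^ 2 + f 2 ^ 2)) ^ 2
        + a ^ 2 * (f 0 ^ 2 + f 1 ^ 2 + f 2 ^ 2) := by
  have h : (1 + a • skew f + b • skew f ^ 2) =
      !![1 - b*(f 1^2 + f 2^2), -a*f 2 + b*f 0*f 1, a*f 1 + b*f 0*f 2;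
        a*f 2 + b*f 0*f 1, 1 - b*(f 0^2+f 2^2), -a*f 0 + b*f 1*f 2;
        -a*f 1 + b*f 0*f 2, a*f 0 + b*f 1*f 2, 1 - b*(f 0^2+f 1^2)] := by
    ext i j
    fin_cases i <;> fin_cases j <;>
      simp [skew, pow_two, mul_apply, Fin.sum_univ_three, Matrix.one_apply] <;> ring
  rw [h, Matrix.det_fin_three]
  simp
  ring

lemma det_exp_form {f : Fin 3 → ℝ} (hθ : enorm3 f ≠ 0) :
    (1 + (Real.sin (enorm3 f) / enorm3 f) • skew f
        + ((1 - Real.cos (enorm3 f)) / enorm3 f ^ 2) • skew f ^ 2).det = 1 := by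
  rw [det_rodrigues, ← sq_enorm3 f]
  have hp := Real.sin_sq_add_cos_sq (enorm3 f)
  field_simp
  nlinarith [hp]

lemma exp_skew_mem_SO3 {f : Fin 3 → ℝ} (hθ : enorm3 f ≠ 0) :
    NormedSpace.exp (skew f) ∈ SO3 := by
  constructor
  · rw [← Matrix.exp_transpose, skew_transpose,
      ← Matrix.exp_add_of_commute (-(skew f)) (skew f) ((Commute.refl (skew f)).neg_left),
      neg_add_cancel, NormedSpace.exp_zero]
  · rw [exp_skew_eq hθ]
    exact det_exp_form hθ

/-! ### The 5×5 block structure -/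

/-- The `5×5` block matrix with zero second/third block row. -/
def blk (C : Matrix (Fin 3) (Fin 3) ℝ) (w u : Fin 3 → ℝ) : Matrix (Fin 5) (Fin 5) ℝ :=
  !![C 0 0, C 0 1, C 0 2, w 0, u 0;
     C 1 0, C 1 1, C 1 2, w 1, u 1;
     C 2 0, C 2 1, C 2 2, w 2, u 2;
     0, 0, 0, 0, 0;
     0, 0, 0, 0, 0]

lemma blk_add (C C' : Matrix (Fin 3) (Fin 3) ℝ) (w w' u u' : Fin 3 → ℝ) :
    blk (C + C') (w + w') (u + u') = blk C w u + blk C' w' u' := by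
  ext i j
  fin_cases i <;> fin_cases j <;> simp [blk, Matrix.vecHead, Matrix.vecTail]

lemma blk_smul (c : ℝ) (C : Matrix (Fin 3) (Fin 3) ℝ) (w u : Fin 3 → ℝ) :
    blk (c • C) (c • w) (c • u) = c • blk C w u := by
  ext i j
  fin_cases i <;> fin_cases j <;> simp [blk, Matrix.vecHead, Matrix.vecTail]

/-- `blk` as a continuous linear map. -/
noncomputable def blkCLM :
    (Matrix (Fin 3) (Fin 3) ℝ × ((Fin 3 → ℝ) × (Fin 3 → ℝ))) →L[ℝ] Matrix (Fin 5) (Fin 5) ℝ :=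
  LinearMap.toContinuousLinearMap
    { toFun := fun p => blk p.1 p.2.1 p.2.2
      map_add' := fun p q => blk_add _ _ _ _ _ _
      map_smul' := fun c p => (blk_smul c _ _ _).symm ▸ rfl }

lemma blkCLM_apply (C : Matrix (Fin 3) (Fin 3) ℝ) (w u : Fin 3 → ℝ) :
    blkCLM (C, w, u) = blk C w u := rfl

/-- `A ↦ A *ᵥ v` as a continuous linear map. -/
noncomputable def mvCLM (v : Fin 3 → ℝ) :
    Matrix (Fin 3) (Fin 3) ℝ →L[ℝ] (Fin 3 → ℝ) :=
  LinearMap.toContinuousLinearMap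
    { toFun := fun A => A *ᵥ v
      map_add' := fun A B => Matrix.add_mulVec A B v
      map_smul' := fun c A => Matrix.smul_mulVec c A v }

lemma mvCLM_apply (v : Fin 3 → ℝ) (A : Matrix (Fin 3) (Fin 3) ℝ) :
    mvCLM v A = A *ᵥ v := rfl

lemma wedge_eq_blk (f v r : Fin 3 → ℝ) : wedge f v r = blk (skew f) v r := by
  ext i j
  fin_cases i <;> fin_cases j <;> simp [wedge, blk, skew]

set_option maxHeartbeats 1000000 in
lemma wedge_mul_blk (f v r : Fin 3 → ℝ) (C : Matrix (Fin 3) (Fin 3) ℝ) (w u : Fin 3 → ℝ) :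
    wedge f v r * blk C w u = blk (skew f * C) (skew f *ᵥ w) (skew f *ᵥ u) := by
  ext i j
  fin_cases i <;> fin_cases j <;>
    simp [wedge, blk, skew, mul_apply, mulVec, dotProduct, Fin.sum_univ_five,
      Fin.sum_univ_three, Matrix.cons_val_zero, Matrix.cons_val_one, Matrix.cons_val_two,
      Matrix.cons_val_three, Matrix.cons_val_four, Matrix.head_cons, Matrix.vecHead,
      Matrix.vecTail] <;> ring

lemma wedge_pow_succ (f v r : Fin 3 → ℝ) (n : ℕ) :
    wedge f v r ^ (n + 1)
      = blk (skew f ^ (n + 1)) (skew f ^ n *ᵥ v) (skew f ^ n *ᵥ r) := by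
  induction n with
  | zero => simpa using wedge_eq_blk f v r
  | succ n ih =>
    rw [pow_succ', ih, wedge_mul_blk, mulVec_mulVec, mulVec_mulVec,
      ← pow_succ', ← pow_succ']

lemma blk_add_one (C : Matrix (Fin 3) (Fin 3) ℝ) (w u : Fin 3 → ℝ) :
    blk C w u + 1 = embed (C + 1) w u := by
  ext i j
  fin_cases i <;> fin_cases j <;>
    simp [blk, embed, Matrix.one_apply, Matrix.vecHead, Matrix.vecTail]

end Aux

/-! ### Main theorem -/

section Main

attribute [local instance] Matrix.linftyOpNormedAddCommGroup Matrix.linftyOpNormedRing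
  Matrix.linftyOpNormedAlgebra

lemma exp_wedge_aux (f v r : Fin 3 → ℝ) (hf : f ≠ 0) :
    NormedSpace.exp (wedge f v r) =
        embed (NormedSpace.exp (skew f)) (leftJac f *ᵥ v) (leftJac f *ᵥ r) ∧
      NormedSpace.exp (wedge f v r) ∈ SE23 := by
  have hθ : enorm3 f ≠ 0 := (enorm3_pos hf).ne'
  set S := skew f with hS
  -- exp series for `S`, shifted by one
  have hexpS : HasSum (fun n : ℕ => ((n ! : ℝ))⁻¹ • S ^ n) (NormedSpace.exp S) := by
    rw [NormedSpace.exp_eq_tsum ℝ]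
    exact (NormedSpace.expSeries_summable' (𝕂 := ℝ) S).hasSum
  have hA0 : HasSum (fun n : ℕ =>
      (fun n : ℕ => ((n ! : ℝ))⁻¹ • S ^ n) (n + 1)) (NormedSpace.exp S - 1) :=
    (hasSum_nat_add_iff (f := fun n : ℕ => ((n ! : ℝ))⁻¹ • S ^ n) 1).mpr
      (by simpa using hexpS)
  have hA : HasSum (fun n : ℕ => (((n + 1)! : ℝ))⁻¹ • S ^ (n + 1))
      (NormedSpace.exp S - 1) := hA0
  -- left Jacobian series, applied to `v` and `r`
  have hJ : HasSum (fun n : ℕ => (((n + 1)! : ℝ))⁻¹ • S ^ n) (leftJac f) := hasSum_leftJac hθ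
  have hv := (mvCLM v).hasSum hJ
  have hr := (mvCLM r).hasSum hJ
  -- combine into the block matrix series
  have htriple := (blkCLM.hasSum (hA.prodMk (hv.prodMk hr)))
  have he : (fun n : ℕ => blkCLM ((((n + 1)! : ℝ))⁻¹ • S ^ (n + 1),
        mvCLM v ((((n + 1)! : ℝ))⁻¹ • S ^ n), mvCLM r ((((n + 1)! : ℝ))⁻¹ • S ^ n)))
      = fun n : ℕ => (fun n : ℕ => ((n ! : ℝ))⁻¹ • wedge f v r ^ n) (n + 1) := by
    funext n
    simp only [mvCLM_apply, blkCLM_apply, Matrix.smul_mulVec, blk_smul,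
      wedge_pow_succ, hS]
  rw [he] at htriple
  have htotal := (hasSum_nat_add_iff
      (f := fun n : ℕ => ((n ! : ℝ))⁻¹ • wedge f v r ^ n) 1).mp htriple
  have hmain : NormedSpace.exp (wedge f v r)
      = embed (NormedSpace.exp S) (leftJac f *ᵥ v) (leftJac f *ᵥ r) := by
    rw [NormedSpace.exp_eq_tsum ℝ]
    refine Eq.trans htotal.tsum_eq ?_
    have h1 : (∑ i ∈ Finset.range 1, ((i ! : ℝ))⁻¹ • wedge f v r ^ i)
        = (1 : Matrix (Fin 5) (Fin 5) ℝ) := by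
      simp
    rw [h1, blkCLM_apply, mvCLM_apply, mvCLM_apply, blk_add_one, sub_add_cancel]
  refine ⟨hmain, ?_⟩
  rw [hmain]
  exact ⟨NormedSpace.exp S, exp_skew_mem_SO3 hθ, leftJac f *ᵥ v, leftJac f *ᵥ r, rfl⟩

end Main

/-- Closed form of the `SE₂(3)` exponential:
`exp(ξ^∧) = [[exp(ξᶠ^×), J̃(ξᶠ)ξᵛ, J̃(ξᶠ)ξʳ],[0,1,0],[0,0,1]]`; in particular
`exp(ξ^∧) ∈ SE₂(3)`. -/
theorem exp_wedge (f v r : Fin 3 → ℝ) (hf : f ≠ 0) :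
    NormedSpace.exp (wedge f v r) =
        embed (NormedSpace.exp (skew f)) (leftJac f *ᵥ v) (leftJac f *ᵥ r) ∧
      NormedSpace.exp (wedge f v r) ∈ SE23 :=
  exp_wedge_aux f v r hf
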